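/- arXiv:1301.1535 — 3 statements merged into one kernel-verified Lean document; each statement's English description precedes it below -/
import Mathlib

section
/- Let N and N₂ be positive natural numbers, λ a complex number, and φ : Fin N → Fin N₂ → Fin N → ℂ. Let U ∈ U(N) be a complex unitary matrix and O ∈ O(N₂) a real orthogonal matrix. Define the transformed field φ' by φ' i j k = ∑_{i',j',k'} U i i' · ((O j j' : ℝ) : ℂ) · U k k' · φ i' j' k'. Define the multi-orientable action S[φ] = (1/2) ∑_{i,j,k} conj(φ i j k) · φ i j k + (λ/4) ∑_{i,j,k,i',j',k'} φ i j k · conj(φ k' j' i) · φ k' j i' · conj(φ k j' i'). Then S[φ'] = S[φ]. -/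
open Finset Matrix

namespace MOAux

variable {N N₂ : ℕ}

/-- slice of a 3-tensor along the middle index -/
def msl (ψ : Fin N → Fin N₂ → Fin N → ℂ) (j : Fin N₂) :
    Matrix (Fin N) (Fin N) ℂ := Matrix.of fun i k => ψ i j k

lemma quad_trace (ψ : Fin N → Fin N₂ → Fin N → ℂ) :
    (∑ i, ∑ j, ∑ k, starRingEnd ℂ (ψ i j k) * ψ i j k)
      = ∑ j, ((msl ψ j)ᴴ * msl ψ j).trace := by
  rw [Finset.sum_comm]
  refine Finset.sum_congr rfl fun j _ => ?_
  rw [Finset.sum_comm]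
  simp only [Matrix.trace, Matrix.diag, Matrix.mul_apply, Matrix.conjTranspose_apply,
    msl, Matrix.of_apply, starRingEnd_apply]

lemma sum_reorder6 {α : Type*} [AddCommMonoid α] {ι₁ ι₂ ι₃ ι₄ ι₅ ι₆ : Type*}
    [Fintype ι₁] [Fintype ι₂] [Fintype ι₃] [Fintype ι₄] [Fintype ι₅] [Fintype ι₆]
    (f : ι₁ → ι₂ → ι₃ → ι₄ → ι₅ → ι₆ → α) :
    (∑ a, ∑ b, ∑ c, ∑ d, ∑ e, ∑ g, f a b c d e g)
      = ∑ b, ∑ e, ∑ c, ∑ d, ∑ g, ∑ a, f a b c d e g := by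
  rw [Finset.sum_comm]
  conv_lhs => enter [2, b, 2, a, 2, c]; rw [Finset.sum_comm]
  conv_lhs => enter [2, b, 2, a]; rw [Finset.sum_comm]
  conv_lhs => enter [2, b]; rw [Finset.sum_comm]
  conv_lhs => enter [2, b, 2, e]; rw [Finset.sum_comm]
  conv_lhs => enter [2, b, 2, e, 2, c]; rw [Finset.sum_comm]
  conv_lhs => enter [2, b, 2, e, 2, c, 2, d]; rw [Finset.sum_comm]

lemma quart_trace (ψ : Fin N → Fin N₂ → Fin N → ℂ) :
    (∑ i, ∑ j, ∑ k, ∑ i', ∑ j', ∑ k',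
        ψ i j k * starRingEnd ℂ (ψ k' j' i) * ψ k' j i'
          * starRingEnd ℂ (ψ k j' i'))
      = ∑ j, ∑ j', ((msl ψ j)ᵀ * (msl ψ j')ᴴ * msl ψ j * (msl ψ j')ᴴ).trace := by
  rw [sum_reorder6]
  refine Finset.sum_congr rfl fun j _ => Finset.sum_congr rfl fun j' _ => ?_
  simp only [Matrix.trace, Matrix.diag, Matrix.mul_apply, Matrix.conjTranspose_apply,
    Matrix.transpose_apply, msl, Matrix.of_apply, starRingEnd_apply,
    Finset.sum_mul, Finset.mul_sum]

lemma cancel_mid {n : ℕ} {P Q : Matrix (Fin n) (Fin n) ℂ} (h : P * Q = 1)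
    (X Y : Matrix (Fin n) (Fin n) ℂ) : X * (P * (Q * Y)) = X * Y := by
  rw [← Matrix.mul_assoc P Q Y, h, Matrix.one_mul]

lemma trace_conj_cancel {n : ℕ} (V : Matrix (Fin n) (Fin n) ℂ)
    (hV : Vᴴ * V = 1) (hVt : Vᵀ * (Vᵀ)ᴴ = 1)
    (A B : Matrix (Fin n) (Fin n) ℂ) :
    ((V * A * Vᵀ)ᴴ * (V * B * Vᵀ)).trace = (Aᴴ * B).trace := by
  have h : (V * A * Vᵀ)ᴴ = (Vᵀ)ᴴ * (Aᴴ * Vᴴ) := by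
    rw [Matrix.conjTranspose_mul, Matrix.conjTranspose_mul]
  rw [h]
  calc ((Vᵀ)ᴴ * (Aᴴ * Vᴴ) * (V * B * Vᵀ)).trace
      = ((Vᵀ)ᴴ * (Aᴴ * (Vᴴ * (V * (B * Vᵀ))))).trace := by
        simp only [Matrix.mul_assoc]
    _ = ((Vᵀ)ᴴ * (Aᴴ * (B * Vᵀ))).trace := by rw [cancel_mid hV]
    _ = ((Aᴴ * (B * Vᵀ)) * (Vᵀ)ᴴ).trace := by rw [Matrix.trace_mul_comm]
    _ = (Aᴴ * B).trace := by
        rw [Matrix.mul_assoc, Matrix.mul_assoc, hVt, Matrix.mul_one]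

lemma quad_inv (V : Matrix (Fin N) (Fin N) ℂ) (hV : Vᴴ * V = 1) (hVt : Vᵀ * (Vᵀ)ᴴ = 1)
    (c : Fin N₂ → Fin N₂ → ℂ) (hcs : ∀ j b, star (c j b) = c j b)
    (hcd : ∀ b b', (∑ j, c j b * c j b') = if b = b' then 1 else 0)
    (A A' : Fin N₂ → Matrix (Fin N) (Fin N) ℂ)
    (hA' : ∀ j, A' j = ∑ b, c j b • (V * A b * Vᵀ)) :
    ∑ j, ((A' j)ᴴ * A' j).trace = ∑ j, ((A j)ᴴ * A j).trace := by
  have h1 : ∀ j, ((A' j)ᴴ * A' j).trace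
      = ∑ b, ∑ b', (c j b * c j b') * ((A b)ᴴ * A b').trace := by
    intro j
    simp only [hA', Matrix.conjTranspose_sum, Matrix.conjTranspose_smul, hcs,
      Finset.sum_mul, Finset.mul_sum, smul_mul_assoc, mul_smul_comm, smul_smul,
      Matrix.trace_sum, Matrix.trace_smul, smul_eq_mul,
      trace_conj_cancel V hV hVt]
    rw [Finset.sum_comm]
    exact Finset.sum_congr rfl fun b _ => Finset.sum_congr rfl fun b' _ => by ring
  calc ∑ j, ((A' j)ᴴ * A' j).trace
      = ∑ j, ∑ b, ∑ b', (c j b * c j b') * ((A b)ᴴ * A b').trace := by simp only [h1]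
    _ = ∑ b, ∑ b', (∑ j, c j b * c j b') * ((A b)ᴴ * A b').trace := by
        rw [Finset.sum_comm]
        refine Finset.sum_congr rfl fun b _ => ?_
        rw [Finset.sum_comm]
        refine Finset.sum_congr rfl fun b' _ => ?_
        rw [Finset.sum_mul]
    _ = ∑ b, ((A b)ᴴ * A b).trace := by
        simp only [hcd, ite_mul, one_mul, zero_mul]
        refine Finset.sum_congr rfl fun b _ => ?_
        rw [Finset.sum_ite_eq]
        simp

lemma trace_conj_cancel4' {n : ℕ} (V : Matrix (Fin n) (Fin n) ℂ)
    (hV : Vᴴ * V = 1) (hVt : Vᵀ * (Vᵀ)ᴴ = 1)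
    (A B C D : Matrix (Fin n) (Fin n) ℂ) :
    (V * A * Vᵀ * ((Vᵀ)ᴴ * B * Vᴴ) * (V * C * Vᵀ) * ((Vᵀ)ᴴ * D * Vᴴ)).trace
      = (A * B * C * D).trace := by
  calc (V * A * Vᵀ * ((Vᵀ)ᴴ * B * Vᴴ) * (V * C * Vᵀ) * ((Vᵀ)ᴴ * D * Vᴴ)).trace
      = (V * (A * (Vᵀ * ((Vᵀ)ᴴ * (B * (Vᴴ * (V * (C * (Vᵀ * ((Vᵀ)ᴴ * (D * Vᴴ))))))))))).trace := by
        simp only [Matrix.mul_assoc]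
    _ = (V * (A * (B * (C * (D * Vᴴ))))).trace := by
        rw [cancel_mid hVt, cancel_mid hV, cancel_mid hVt]
    _ = ((A * (B * (C * (D * Vᴴ)))) * V).trace := by rw [Matrix.trace_mul_comm]
    _ = (A * (B * (C * (D * (Vᴴ * V))))).trace := by simp only [Matrix.mul_assoc]
    _ = (A * B * C * D).trace := by
        rw [hV, Matrix.mul_one, ← Matrix.mul_assoc, ← Matrix.mul_assoc]

lemma sum_rev4 {α : Type*} [AddCommMonoid α] {ι₁ ι₂ ι₃ ι₄ : Type*}
    [Fintype ι₁] [Fintype ι₂] [Fintype ι₃] [Fintype ι₄]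
    (f : ι₁ → ι₂ → ι₃ → ι₄ → α) :
    (∑ a, ∑ b, ∑ c, ∑ d, f a b c d) = ∑ d, ∑ c, ∑ b, ∑ a, f a b c d := by
  rw [Finset.sum_comm]
  conv_lhs => enter [2, b]; rw [Finset.sum_comm]
  conv_lhs => enter [2, b, 2, c]; rw [Finset.sum_comm]
  rw [Finset.sum_comm]
  conv_lhs => enter [2, c]; rw [Finset.sum_comm]
  rw [Finset.sum_comm]

lemma sum_reorder6' {α : Type*} [AddCommMonoid α] {ι₁ ι₂ ι₃ ι₄ ι₅ ι₆ : Type*}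
    [Fintype ι₁] [Fintype ι₂] [Fintype ι₃] [Fintype ι₄] [Fintype ι₅] [Fintype ι₆]
    (f : ι₁ → ι₂ → ι₃ → ι₄ → ι₅ → ι₆ → α) :
    (∑ a, ∑ b, ∑ c, ∑ d, ∑ e, ∑ g, f a b c d e g)
      = ∑ c, ∑ d, ∑ e, ∑ g, ∑ a, ∑ b, f a b c d e g := by
  rw [Finset.sum_comm]
  conv_lhs => enter [2, b]; rw [Finset.sum_comm]
  conv_lhs => enter [2, b, 2, c]; rw [Finset.sum_comm]
  conv_lhs => enter [2, b, 2, c, 2, d]; rw [Finset.sum_comm]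
  conv_lhs => enter [2, b, 2, c, 2, d, 2, e]; rw [Finset.sum_comm]
  rw [Finset.sum_comm]
  conv_lhs => enter [2, c]; rw [Finset.sum_comm]
  conv_lhs => enter [2, c, 2, d]; rw [Finset.sum_comm]
  conv_lhs => enter [2, c, 2, d, 2, e]; rw [Finset.sum_comm]
  conv_lhs => enter [2, c, 2, d, 2, e, 2, g]; rw [Finset.sum_comm]

lemma quart_inv (V : Matrix (Fin N) (Fin N) ℂ) (hV : Vᴴ * V = 1) (hVt : Vᵀ * (Vᵀ)ᴴ = 1)
    (c : Fin N₂ → Fin N₂ → ℂ) (hcs : ∀ j b, star (c j b) = c j b)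
    (hcd : ∀ b b', (∑ j, c j b * c j b') = if b = b' then 1 else 0)
    (A A' : Fin N₂ → Matrix (Fin N) (Fin N) ℂ)
    (hA' : ∀ j, A' j = ∑ b, c j b • (V * A b * Vᵀ)) :
    ∑ j, ∑ j', ((A' j)ᵀ * (A' j')ᴴ * A' j * (A' j')ᴴ).trace
      = ∑ j, ∑ j', ((A j)ᵀ * (A j')ᴴ * A j * (A j')ᴴ).trace := by
  have h2 : ∀ j, (A' j)ᵀ = ∑ b, c j b • (V * (A b)ᵀ * Vᵀ) := by
    intro j
    rw [hA']
    simp only [Matrix.transpose_sum, Matrix.transpose_smul, Matrix.transpose_mul,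
      Matrix.transpose_transpose, Matrix.mul_assoc]
  have h3 : ∀ j, (A' j)ᴴ = ∑ b, c j b • ((Vᵀ)ᴴ * (A b)ᴴ * Vᴴ) := by
    intro j
    rw [hA']
    simp only [Matrix.conjTranspose_sum, Matrix.conjTranspose_smul, hcs,
      Matrix.conjTranspose_mul, Matrix.mul_assoc]
  have h4 : ∀ j j', ((A' j)ᵀ * (A' j')ᴴ * A' j * (A' j')ᴴ).trace
      = ∑ b₁, ∑ b₂, ∑ b₃, ∑ b₄, (c j b₁ * c j' b₂ * c j b₃ * c j' b₄)
          * ((A b₁)ᵀ * (A b₂)ᴴ * A b₃ * (A b₄)ᴴ).trace := by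
    intro j j'
    rw [h2 j, h3 j', hA' j]
    simp only [Finset.sum_mul, Finset.mul_sum, smul_mul_assoc, mul_smul_comm, smul_smul,
      Matrix.trace_sum, Matrix.trace_smul, smul_eq_mul,
      trace_conj_cancel4' V hV hVt]
    rw [sum_rev4]
    exact Finset.sum_congr rfl fun b₁ _ => Finset.sum_congr rfl fun b₂ _ =>
      Finset.sum_congr rfl fun b₃ _ => Finset.sum_congr rfl fun b₄ _ => by ring
  calc ∑ j, ∑ j', ((A' j)ᵀ * (A' j')ᴴ * A' j * (A' j')ᴴ).trace
      = ∑ j, ∑ j', ∑ b₁, ∑ b₂, ∑ b₃, ∑ b₄,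
          (c j b₁ * c j' b₂ * c j b₃ * c j' b₄)
            * ((A b₁)ᵀ * (A b₂)ᴴ * A b₃ * (A b₄)ᴴ).trace := by
        simp only [h4]
    _ = ∑ b₁, ∑ b₂, ∑ b₃, ∑ b₄, ∑ j, ∑ j',
          (c j b₁ * c j' b₂ * c j b₃ * c j' b₄)
            * ((A b₁)ᵀ * (A b₂)ᴴ * A b₃ * (A b₄)ᴴ).trace := sum_reorder6' _
    _ = ∑ b₁, ∑ b₂, ∑ b₃, ∑ b₄,
          ((if b₁ = b₃ then (1:ℂ) else 0) * (if b₂ = b₄ then (1:ℂ) else 0))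
            * ((A b₁)ᵀ * (A b₂)ᴴ * A b₃ * (A b₄)ᴴ).trace := by
        refine Finset.sum_congr rfl fun b₁ _ => Finset.sum_congr rfl fun b₂ _ =>
          Finset.sum_congr rfl fun b₃ _ => Finset.sum_congr rfl fun b₄ _ => ?_
        have hkey : (∑ j, ∑ j', (c j b₁ * c j' b₂ * c j b₃ * c j' b₄))
            = (∑ j, c j b₁ * c j b₃) * (∑ j', c j' b₂ * c j' b₄) := by
          rw [Finset.sum_mul_sum]
          exact Finset.sum_congr rfl fun j _ => Finset.sum_congr rfl fun j' _ => by ring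
        calc ∑ j, ∑ j', (c j b₁ * c j' b₂ * c j b₃ * c j' b₄)
              * ((A b₁)ᵀ * (A b₂)ᴴ * A b₃ * (A b₄)ᴴ).trace
            = (∑ j, ∑ j', (c j b₁ * c j' b₂ * c j b₃ * c j' b₄))
              * ((A b₁)ᵀ * (A b₂)ᴴ * A b₃ * (A b₄)ᴴ).trace := by
              simp only [Finset.sum_mul]
          _ = ((if b₁ = b₃ then (1:ℂ) else 0) * (if b₂ = b₄ then (1:ℂ) else 0))
              * ((A b₁)ᵀ * (A b₂)ᴴ * A b₃ * (A b₄)ᴴ).trace := by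
              rw [hkey, hcd, hcd]
    _ = ∑ j, ∑ j', ((A j)ᵀ * (A j')ᴴ * A j * (A j')ᴴ).trace := by
        simp [ite_mul, one_mul, zero_mul, Finset.sum_ite_irrel, Finset.sum_const_zero,
          Finset.sum_ite_eq]

lemma sum_reorder3 {α : Type*} [AddCommMonoid α] {ι₁ ι₂ ι₃ : Type*}
    [Fintype ι₁] [Fintype ι₂] [Fintype ι₃]
    (f : ι₁ → ι₂ → ι₃ → α) :
    (∑ a, ∑ b, ∑ c, f a b c) = ∑ b, ∑ c, ∑ a, f a b c := by
  rw [Finset.sum_comm]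
  conv_lhs => enter [2, b]; rw [Finset.sum_comm]

end MOAux

/-- The multi-orientable action
`S[φ] = (1/2) ∑ conj(φᵢⱼₖ) φᵢⱼₖ
       + (λ/4) ∑ φᵢⱼₖ conj(φ_{k'j'i}) φ_{k'ji'} conj(φ_{kj'i'})`
is invariant under `U(N) × O(N₂) × U(N)` acting with the same unitary `U` on
both outer slots and a real orthogonal matrix `O` on the middle slot. -/
theorem mo_action_invariant (N N₂ : ℕ) (hN : 0 < N) (hN₂ : 0 < N₂) (l : ℂ)
    (φ : Fin N → Fin N₂ → Fin N → ℂ)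
    (U : Matrix.unitaryGroup (Fin N) ℂ)
    (O : Matrix.orthogonalGroup (Fin N₂) ℝ)
    (φ' : Fin N → Fin N₂ → Fin N → ℂ)
    (hφ' : ∀ (i : Fin N) (j : Fin N₂) (k : Fin N),
      φ' i j k = ∑ i' : Fin N, ∑ j' : Fin N₂, ∑ k' : Fin N,
        (U : Matrix (Fin N) (Fin N) ℂ) i i' *
        (((O : Matrix (Fin N₂) (Fin N₂) ℝ) j j' : ℝ) : ℂ) *
        (U : Matrix (Fin N) (Fin N) ℂ) k k' * φ i' j' k')
    (S : (Fin N → Fin N₂ → Fin N → ℂ) → ℂ)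
    (hS : ∀ ψ : Fin N → Fin N₂ → Fin N → ℂ,
      S ψ = (1/2) * (∑ i : Fin N, ∑ j : Fin N₂, ∑ k : Fin N,
              starRingEnd ℂ (ψ i j k) * ψ i j k)
          + (l/4) * (∑ i : Fin N, ∑ j : Fin N₂, ∑ k : Fin N,
              ∑ i' : Fin N, ∑ j' : Fin N₂, ∑ k' : Fin N,
              ψ i j k * starRingEnd ℂ (ψ k' j' i) * ψ k' j i'
                * starRingEnd ℂ (ψ k j' i'))) :
    S φ' = S φ := by
  set V : Matrix (Fin N) (Fin N) ℂ := (U : Matrix (Fin N) (Fin N) ℂ) with hVdef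
  set c : Fin N₂ → Fin N₂ → ℂ :=
    fun j b => (((O : Matrix (Fin N₂) (Fin N₂) ℝ) j b : ℝ) : ℂ) with hcdef
  have hV : Vᴴ * V = 1 := by
    simpa [Matrix.star_eq_conjTranspose] using U.2.1
  have hct : (Vᵀ)ᴴ = (Vᴴ)ᵀ := by
    ext i k
    simp [Matrix.conjTranspose_apply]
  have hVt : Vᵀ * (Vᵀ)ᴴ = 1 := by
    rw [hct, ← Matrix.transpose_mul, hV, Matrix.transpose_one]
  have hcs : ∀ j b, star (c j b) = c j b := by
    intro j b
    simp [hcdef, Complex.star_def, Complex.conj_ofReal]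
  have hOr : ∀ b b', (∑ j, (O : Matrix (Fin N₂) (Fin N₂) ℝ) j b
      * (O : Matrix (Fin N₂) (Fin N₂) ℝ) j b') = if b = b' then (1:ℝ) else 0 := by
    intro b b'
    have h := congrFun (congrFun O.2.1 b) b'
    simpa [Matrix.mul_apply, Matrix.star_eq_conjTranspose, Matrix.conjTranspose_apply,
      Matrix.one_apply] using h
  have hcd : ∀ b b', (∑ j, c j b * c j b') = if b = b' then (1:ℂ) else 0 := by
    intro b b'
    have : (∑ j, c j b * c j b')
        = (((∑ j, (O : Matrix (Fin N₂) (Fin N₂) ℝ) j b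
            * (O : Matrix (Fin N₂) (Fin N₂) ℝ) j b' : ℝ)) : ℂ) := by
      push_cast
      rfl
    rw [this, hOr]
    split_ifs <;> simp
  have hA' : ∀ j, MOAux.msl φ' j = ∑ b, c j b • (V * MOAux.msl φ b * Vᵀ) := by
    intro j
    ext i k
    simp only [MOAux.msl, Matrix.of_apply, hφ', Matrix.sum_apply, Matrix.smul_apply,
      Matrix.mul_apply, Matrix.transpose_apply, smul_eq_mul, Finset.mul_sum,
      Finset.sum_mul]
    rw [MOAux.sum_reorder3]
    refine Finset.sum_congr rfl fun b _ => Finset.sum_congr rfl fun x _ =>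
      Finset.sum_congr rfl fun a _ => by ring
  rw [hS φ', hS φ, MOAux.quad_trace, MOAux.quad_trace, MOAux.quart_trace, MOAux.quart_trace,
    MOAux.quad_inv V hV hVt c hcs hcd (MOAux.msl φ) (MOAux.msl φ') hA',
    MOAux.quart_inv V hV hVt c hcs hcd (MOAux.msl φ) (MOAux.msl φ') hA']
end

section
/- Let V be a natural number and let F : ℕ → ℕ be a finitely supported function. Assume F 0 = 0, F 1 = 0 and F 3 = 0, that 2 · (∑_p F p) = 3·V + 6, and that ∑_p p · F p = 6·V. Then F 2 > 0. -/
/-- Arithmetic core of the proposition that a bipartite vacuum graph of degree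
zero has a face with two vertices: if `F p` is the (finitely supported) number
of faces of length `p`, with `F 0 = F 1 = F 3 = 0`, `∑ F p = (3/2)V + 3` and
`∑ p · F p = 6V`, then `F 2 > 0`. -/
theorem exists_face_of_length_two (V : ℕ) (F : ℕ →₀ ℕ)
    (h0 : F 0 = 0) (h1 : F 1 = 0) (h3 : F 3 = 0)
    (hsum : 2 * (∑ p ∈ F.support, F p) = 3 * V + 6)
    (hlen : ∑ p ∈ F.support, p * F p = 6 * V) :
    0 < F 2 := by
  by_contra h
  have h2 : F 2 = 0 := Nat.eq_zero_of_not_pos h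
  have key : ∀ p ∈ F.support, 4 * F p ≤ p * F p := by
    intro p hp
    have hne : F p ≠ 0 := Finsupp.mem_support_iff.mp hp
    have hp4 : 4 ≤ p := by
      by_contra hlt
      interval_cases p <;> simp_all
    exact Nat.mul_le_mul_right _ hp4
  have hle : 4 * (∑ p ∈ F.support, F p) ≤ ∑ p ∈ F.support, p * F p := by
    rw [Finset.mul_sum]
    exact Finset.sum_le_sum key
  omega
end

section
/- Let n be an odd positive natural number, and let ε : ZMod n → ℤˣ and σ : ZMod n → ℤˣ be functions satisfying σ (v + 1) = −(ε v) · (σ v) for all v : ZMod n. Then the number of vertices of type II is odd: the cardinality of {v : ZMod n | ε v = −1} is odd. -/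
/-- Along any odd cycle of a multi-orientable graph, the number of type II
vertices (those with `ε v = −1`) is odd: if `n` is odd and the sign propagation
rule `σ(v+1) = −ε(v)·σ(v)` holds around the cycle `ZMod n`, then
`#{v | ε v = −1}` is odd. -/
theorem odd_card_type_II (n : ℕ) (hn : 0 < n) (hodd : Odd n)
    (ε σ : ZMod n → ℤˣ)
    (h : ∀ v : ZMod n, σ (v + 1) = -(ε v) * σ v) :
    Odd (Nat.card {v : ZMod n | ε v = -1}) := by
  haveI : NeZero n := ⟨hn.ne'⟩
  -- product of the recurrence over all vertices
  have hσ : ∏ v : ZMod n, σ (v + 1) = ∏ v : ZMod n, σ v :=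
    Fintype.prod_equiv (Equiv.addRight (1 : ZMod n)) _ _ (fun v => rfl)
  have hprod : (∏ v : ZMod n, (-(ε v) * σ v)) = ∏ v : ZMod n, σ v := by
    rw [← hσ]; exact Finset.prod_congr rfl (fun v _ => (h v).symm)
  rw [Finset.prod_mul_distrib] at hprod
  have hne : (∏ v : ZMod n, -ε v) = 1 :=
    mul_right_cancel (hprod.trans (one_mul (∏ v : ZMod n, σ v)).symm)
  have hsplit : (∏ v : ZMod n, -ε v) = (-1 : ℤˣ) ^ n * ∏ v : ZMod n, ε v := by
    rw [Finset.prod_congr rfl (fun v _ => neg_eq_neg_one_mul (ε v)),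
      Finset.prod_mul_distrib, Finset.prod_const, Finset.card_univ, ZMod.card]
  have hεprod : (∏ v : ZMod n, ε v) = -1 := by
    have h1 : ((-1 : ℤˣ)) ^ n = -1 := hodd.neg_one_pow
    rw [hsplit, h1] at hne
    have := congrArg (fun x => (-1 : ℤˣ) * x) hne
    simpa using this
  -- the product equals (-1)^(number of type II vertices)
  classical
  set S := Finset.univ.filter (fun v : ZMod n => ε v = -1) with hS
  have hcard : Nat.card {v : ZMod n | ε v = -1} = S.card := by
    rw [Nat.card_eq_fintype_card]
    simpa [hS] using Fintype.card_subtype (fun v : ZMod n => ε v = -1)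
  have hpow : (∏ v : ZMod n, ε v) = (-1 : ℤˣ) ^ S.card := by
    rw [← Finset.prod_filter_mul_prod_filter_not Finset.univ
      (fun v : ZMod n => ε v = -1) ε]
    have h1 : ∏ v ∈ Finset.univ.filter (fun v : ZMod n => ε v = -1), ε v
        = (-1 : ℤˣ) ^ S.card := by
      rw [Finset.prod_congr rfl (fun v hv => (Finset.mem_filter.mp hv).2)]
      simp [hS]
    have h2 : ∏ v ∈ Finset.univ.filter (fun v : ZMod n => ¬ ε v = -1), ε v = 1 := by
      apply Finset.prod_eq_one
      intro v hv
      rcases Int.units_eq_one_or (ε v) with h' | h'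
      · exact h'
      · exact absurd h' (Finset.mem_filter.mp hv).2
    rw [h1, h2, mul_one]
  rw [hcard]
  rcases Nat.even_or_odd S.card with he | ho
  · exfalso
    rw [hpow, he.neg_one_pow] at hεprod
    exact absurd hεprod (by decide)
  · exact ho
end
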